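/- Suppose Assumption AC holds: there exist sos polynomials a_0, a_1,…,a_r, b_1,…,b_t and R > 0 with R − ‖[x]_d‖² = a_0 + ∑_i a_i f_i + ∑_j b_j h_j identically, deg(a_i f_i) ≤ 2d and deg(b_j h_j) ≤ 2d. Fix k ≥ d and a vector ξ ∈ ℝ^{ℕ^n_{2d}}. If the feasible set of the order-k moment relaxation is nonempty (i.e., some y ∈ ℝ^{ℕ^n_{2k}} satisfies y_0 = 1, L_1^{(k)}[y] ⪰ 0, L_{f_i}^{(k)}[y] ⪰ 0 for all i, L_{h_j}^{(k)}[y] ⪰ 0 for all j), then the semidefinite program minimizing ∑_{|β|≤d} y_{2β} + ∑_{|α|≤2d} ξ_α y_α over this feasible set attains its minimum at some feasible y*. -/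

import Mathlib

open MvPolynomial Finsupp

noncomputable section

/-- The total degree `|α|` of a multi-index `α ∈ ℕ^n`. -/
def mdeg {n : ℕ} (α : Fin n →₀ ℕ) : ℕ := ∑ i, α i

/-- `⌈m/2⌉` for a natural number `m`. -/
def halfCeil (m : ℕ) : ℕ := (m + 1) / 2

/-- The Riesz functional `R_y(f) = ∑_γ f_γ y_γ`. -/
def Riesz {n : ℕ} (y : (Fin n →₀ ℕ) → ℝ) (f : MvPolynomial (Fin n) ℝ) : ℝ :=
  ∑ γ ∈ f.support, f.coeff γ * y γ

/-- The `k`-th localizing matrix `L_f^{(k)}[y]`, indexed by multi-indices; its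
`(α,β)` entry is `∑_γ f_γ y_{α+β+γ}` when `|α|,|β| ≤ s := k - ⌈deg f / 2⌉` (and `0` otherwise). -/
def locMat {n : ℕ} (k : ℕ) (f : MvPolynomial (Fin n) ℝ) (y : (Fin n →₀ ℕ) → ℝ) :
    Matrix (Fin n →₀ ℕ) (Fin n →₀ ℕ) ℝ := fun α β =>
  if mdeg α ≤ k - halfCeil f.totalDegree ∧ mdeg β ≤ k - halfCeil f.totalDegree then
    ∑ γ ∈ f.support, f.coeff γ * y (α + β + γ)
  else 0

/-- Positive semidefiniteness of a (block-finitely supported) matrix indexed by multi-indices: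
symmetry together with nonnegativity of the quadratic form on all finitely supported vectors. -/
def IsPSD {n : ℕ} (M : Matrix (Fin n →₀ ℕ) (Fin n →₀ ℕ) ℝ) : Prop :=
  (∀ α β, M α β = M β α) ∧
  ∀ v : (Fin n →₀ ℕ) →₀ ℝ, 0 ≤ ∑ α ∈ v.support, ∑ β ∈ v.support, v α * M α β * v β

/-- The evaluation `u^α` of a monomial with multi-index `α` at a point `u`. -/
def monoEval {n : ℕ} (u : Fin n → ℝ) (α : Fin n →₀ ℕ) : ℝ := ∏ i, u i ^ α i

/-- The finite set of multi-indices `α ∈ ℕ^n` with `|α| ≤ D`. -/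
def degLE (n D : ℕ) : Finset (Fin n →₀ ℕ) :=
  (Finset.Iic (Finsupp.equivFunOnFinite.symm fun _ : Fin n => D)).filter fun α => mdeg α ≤ D

end

/-- A sum-of-squares (sos) polynomial. -/
def IsSos {n : ℕ} (σ : MvPolynomial (Fin n) ℝ) : Prop :=
  ∃ (L : ℕ) (p : Fin L → MvPolynomial (Fin n) ℝ), σ = ∑ l, p l ^ 2

/-- The polynomial `‖[x]_D‖² = ∑_{|β| ≤ D} x^{2β}`. -/
noncomputable def monVecSq (n D : ℕ) : MvPolynomial (Fin n) ℝ :=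
  ∑ β ∈ degLE n D, (MvPolynomial.monomial β (1 : ℝ)) ^ 2

/-!
Apply the Riesz functional of a feasible `y` to `x^{2δ}` times the certificate. Each sos
multiplier `aᵢ = ∑ pₗ²` has `2 deg pₗ ≤ deg aᵢ`, so `x^{2δ} aᵢ fᵢ` is a sum of `(x^δ pₗ)² fᵢ` with
`x^δ pₗ` small enough for the localizing matrix of `fᵢ`, and its value is nonnegative. This gives
`∑_{|β|≤d} y_{2β+2δ} ≤ R y_{2δ}` whenever `|δ| + d ≤ k`. As `d ≥ 1`, iterating it bounds every
diagonal moment `y_{2α}`, `|α| ≤ k`, and the `2 × 2` minors of the moment matrix then bound all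
moments of degree `≤ 2k`. Moments of higher degree enter neither the constraints nor the objective,
so setting them to zero maps the feasible set into a compact subset of itself without changing
the objective, which is continuous and hence attains its minimum there. For `d = 0` the objective
is constant on the feasible set.
-/

section MultiIndex
variable {n : ℕ}

lemma mdeg_eq_degree (α : Fin n →₀ ℕ) : mdeg α = α.degree :=
  (Finsupp.degree_eq_sum α).symm

lemma mdeg_add (α β : Fin n →₀ ℕ) : mdeg (α + β) = mdeg α + mdeg β := by
  simp only [mdeg_eq_degree, map_add]

lemma mdeg_le_totalDegree {p : MvPolynomial (Fin n) ℝ} {α : Fin n →₀ ℕ} (h : α ∈ p.support) :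
    mdeg α ≤ p.totalDegree :=
  (mdeg_eq_degree α).trans_le (le_totalDegree h)

lemma totalDegree_monomial_le_mdeg (α : Fin n →₀ ℕ) (c : ℝ) :
    (monomial α c).totalDegree ≤ mdeg α :=
  (totalDegree_monomial_le α c).trans_eq (mdeg_eq_degree α).symm

lemma mem_degLE {D : ℕ} {α : Fin n →₀ ℕ} : α ∈ degLE n D ↔ mdeg α ≤ D := by
  refine Finset.mem_filter.trans ⟨And.right, fun h => ⟨Finset.mem_Iic.2 fun i => ?_, h⟩⟩
  simpa using (Finset.single_le_sum (fun j _ => Nat.zero_le (α j)) (Finset.mem_univ i)).trans h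

lemma degLE_zero : degLE n 0 = {0} := by
  ext α
  simp [mem_degLE, mdeg_eq_degree, Finsupp.degree_eq_zero_iff]

lemma exists_add_eq_of_le_mdeg {α : Fin n →₀ ℕ} {c : ℕ} (hc : c ≤ mdeg α) :
    ∃ β δ, β + δ = α ∧ mdeg β = c := by
  obtain ⟨β, hβ, hβc⟩ := Finsupp.exists_le_degree_eq α c (mdeg_eq_degree α ▸ hc)
  exact ⟨β, α - β, add_tsub_cancel_of_le hβ, (mdeg_eq_degree β).trans hβc⟩

end MultiIndex

section Riesz
variable {n : ℕ} (y : (Fin n →₀ ℕ) → ℝ)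

noncomputable def rieszLinear : MvPolynomial (Fin n) ℝ →ₗ[ℝ] ℝ :=
  Finsupp.linearCombination ℝ y ∘ₗ (AddMonoidAlgebra.coeffLinearEquiv ℝ).toLinearMap

lemma Riesz_add (f g : MvPolynomial (Fin n) ℝ) : Riesz y (f + g) = Riesz y f + Riesz y g :=
  map_add (rieszLinear y) f g

lemma Riesz_sub (f g : MvPolynomial (Fin n) ℝ) : Riesz y (f - g) = Riesz y f - Riesz y g :=
  map_sub (rieszLinear y) f g

lemma Riesz_sum {ι : Type*} (s : Finset ι) (f : ι → MvPolynomial (Fin n) ℝ) :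
    Riesz y (∑ i ∈ s, f i) = ∑ i ∈ s, Riesz y (f i) :=
  map_sum (rieszLinear y) f s

lemma Riesz_monomial (μ : Fin n →₀ ℕ) (c : ℝ) : Riesz y (monomial μ c) = c * y μ :=
  Finsupp.linearCombination_single ℝ c μ

lemma Riesz_monomial_mul (μ : Fin n →₀ ℕ) (c : ℝ) (f : MvPolynomial (Fin n) ℝ) :
    Riesz y (monomial μ c * f) = c * ∑ γ ∈ f.support, f.coeff γ * y (μ + γ) := by
  conv_lhs => rw [f.as_sum]
  simp only [Finset.mul_sum, Riesz_sum, monomial_mul, Riesz_monomial]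
  exact Finset.sum_congr rfl fun γ _ => by ring

end Riesz

section Localizing
variable {n k : ℕ} {f : MvPolynomial (Fin n) ℝ} {y : (Fin n →₀ ℕ) → ℝ}

lemma locMat_of_le {α β : Fin n →₀ ℕ} (hα : mdeg α ≤ k - halfCeil f.totalDegree)
    (hβ : mdeg β ≤ k - halfCeil f.totalDegree) :
    locMat k f y α β = ∑ γ ∈ f.support, f.coeff γ * y (α + β + γ) :=
  if_pos ⟨hα, hβ⟩

lemma IsPSD.riesz_mul_self_mul_nonneg (hM : IsPSD (locMat k f y)) {p : MvPolynomial (Fin n) ℝ}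
    (hp : p.totalDegree ≤ k - halfCeil f.totalDegree) : 0 ≤ Riesz y (p * p * f) := by
  have hdeg : ∀ α ∈ p.support, mdeg α ≤ k - halfCeil f.totalDegree :=
    fun α hα => (mdeg_le_totalDegree hα).trans hp
  calc 0 ≤ ∑ α ∈ p.support, ∑ β ∈ p.support, p.coeff α * locMat k f y α β * p.coeff β :=
        hM.2 (AddMonoidAlgebra.coeff p)
    _ = Riesz y (p * p * f) := by
      conv_rhs => rw [p.as_sum]
      rw [Finset.sum_mul_sum, Finset.sum_mul]
      simp only [Finset.sum_mul, monomial_mul, Riesz_sum, Riesz_monomial_mul]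
      refine Finset.sum_congr rfl fun α hα => Finset.sum_congr rfl fun β hβ => ?_
      rw [locMat_of_le (hdeg α hα) (hdeg β hβ), Finset.mul_sum, Finset.sum_mul, Finset.mul_sum]
      exact Finset.sum_congr rfl fun γ _ => by ring

end Localizing

open MonomialOrder in
lemma two_mul_totalDegree_le_totalDegree_sum_sq {σ R ι : Type*} [LinearOrder σ] [WellFoundedGT σ]
    [CommRing R] [LinearOrder R] [IsStrictOrderedRing R] {s : Finset ι}
    (p : ι → MvPolynomial σ R) {l : ι} (hl : l ∈ s) :
    2 * (p l).totalDegree ≤ (∑ i ∈ s, p i ^ 2).totalDegree := by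
  obtain ⟨i₀, hi₀, hmax⟩ :=
    s.exists_max_image (fun i => degLex.toSyn (degLex.degree (p i))) ⟨l, hl⟩
  have hl₀ : (p l).totalDegree ≤ (p i₀).totalDegree := degLex_totalDegree_monotone (hmax l hl)
  rcases eq_or_ne (p i₀) 0 with h0 | h0
  · rw [h0, totalDegree_zero, Nat.le_zero] at hl₀
    simp [hl₀]
  set e := degLex.degree (p i₀)
  -- `e` dominates every `degLex.degree (p i)`, so the leading terms cannot cancel: the
  -- coefficient of `x^{2e}` is `∑ (coeff e (p i))²`, whose `i₀` term is positive
  have hcoeff : (∑ i ∈ s, p i ^ 2).coeff (e + e) ≠ 0 := by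
    rw [coeff_sum]
    refine (Finset.sum_pos' (fun i hi => ?_) ⟨i₀, hi₀, ?_⟩).ne'
    · rw [sq, degLex.coeff_mul_of_add_of_degree_le (hmax i hi) (hmax i hi)]
      exact mul_self_nonneg _
    · rw [sq, degLex.coeff_mul_of_add_of_degree_le le_rfl le_rfl]
      exact mul_self_pos.2 (degLex.coeff_degree_ne_zero_iff.2 h0)
  calc 2 * (p l).totalDegree ≤ (e + e).degree := by
        rw [map_add, degree_degLexDegree]; omega
    _ ≤ _ := le_totalDegree (MvPolynomial.mem_support_iff.2 hcoeff)

section Certificate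
variable {n k d : ℕ} {y : (Fin n →₀ ℕ) → ℝ}

lemma IsPSD.riesz_monomial_mul_sos_mul_nonneg {f σ : MvPolynomial (Fin n) ℝ}
    (hM : IsPSD (locMat k f y)) (hσ : IsSos σ) (hf : halfCeil f.totalDegree ≤ d)
    (hdeg : (σ * f).totalDegree ≤ 2 * d) {δ : Fin n →₀ ℕ} (hδ : mdeg δ + d ≤ k) :
    0 ≤ Riesz y (monomial (δ + δ) 1 * (σ * f)) := by
  rcases eq_or_ne (σ * f) 0 with h0 | hσf
  · simp [h0, Riesz]
  have hdeg' := totalDegree_mul_of_isDomain (left_ne_zero_of_mul hσf)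
    (right_ne_zero_of_mul hσf) ▸ hdeg
  obtain ⟨L, p, rfl⟩ := hσ
  have hexp : monomial (δ + δ) (1 : ℝ) * ((∑ l, p l ^ 2) * f) =
      ∑ l, (monomial δ 1 * p l) * (monomial δ 1 * p l) * f := by
    rw [show monomial (δ + δ) (1 : ℝ) = monomial δ 1 * monomial δ 1 by rw [monomial_mul, one_mul],
      Finset.sum_mul, Finset.mul_sum]
    exact Finset.sum_congr rfl fun l _ => by ring
  rw [hexp, Riesz_sum]
  refine Finset.sum_nonneg fun l _ => hM.riesz_mul_self_mul_nonneg ?_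
  have hpl := two_mul_totalDegree_le_totalDegree_sum_sq p (Finset.mem_univ l)
  have hmul := (totalDegree_mul (monomial δ (1 : ℝ)) (p l)).trans
    (Nat.add_le_add_right (totalDegree_monomial_le_mdeg δ 1) _)
  unfold halfCeil at hf ⊢
  omega

lemma totalDegree_monVecSq_le (n d : ℕ) : (monVecSq n d).totalDegree ≤ 2 * d := by
  refine totalDegree_finsetSum_le fun β hβ => ?_
  rw [sq, monomial_mul]
  refine (totalDegree_monomial_le_mdeg _ _).trans ?_
  rw [mdeg_add]
  have := mem_degLE.1 hβ
  omega

lemma Riesz_monomial_mul_sub_monVecSq (R : ℝ) (δ : Fin n →₀ ℕ) :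
    Riesz y (monomial (δ + δ) 1 * (C R - monVecSq n d)) =
      R * y (δ + δ) - ∑ β ∈ degLE n d, y (β + β + (δ + δ)) := by
  rw [mul_sub, Riesz_sub, C_apply, monomial_mul, Riesz_monomial, monVecSq, Finset.mul_sum,
    Riesz_sum, one_mul, add_zero]
  congr 1
  refine Finset.sum_congr rfl fun β _ => ?_
  rw [sq, monomial_mul, monomial_mul, Riesz_monomial, one_mul, one_mul, one_mul, add_comm]

end Certificate

section MomentBound
variable {n k d : ℕ} {y : (Fin n →₀ ℕ) → ℝ} {R : ℝ}

lemma IsPSD.riesz_mul_self_nonneg (hM : IsPSD (locMat k 1 y)) {p : MvPolynomial (Fin n) ℝ}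
    (hp : p.totalDegree ≤ k) : 0 ≤ Riesz y (p * p) := by
  simpa using hM.riesz_mul_self_mul_nonneg (p := p) (by simpa [halfCeil] using hp)

lemma IsPSD.moment_add_self_nonneg (hM : IsPSD (locMat k 1 y)) {α : Fin n →₀ ℕ}
    (hα : mdeg α ≤ k) : 0 ≤ y (α + α) := by
  simpa [monomial_mul, Riesz_monomial] using
    hM.riesz_mul_self_nonneg ((totalDegree_monomial_le_mdeg α 1).trans hα)

lemma IsPSD.two_mul_abs_moment_le (hM : IsPSD (locMat k 1 y)) {α β : Fin n →₀ ℕ}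
    (hα : mdeg α ≤ k) (hβ : mdeg β ≤ k) : 2 * |y (α + β)| ≤ y (α + α) + y (β + β) := by
  have key : ∀ c : ℝ, 0 ≤ y (α + α) + 2 * c * y (α + β) + c ^ 2 * y (β + β) := fun c => by
    have h := hM.riesz_mul_self_nonneg (p := monomial α 1 + monomial β c)
      ((totalDegree_add _ _).trans (max_le ((totalDegree_monomial_le_mdeg α 1).trans hα)
        ((totalDegree_monomial_le_mdeg β c).trans hβ)))
    simp only [add_mul, mul_add, monomial_mul, Riesz_add, Riesz_monomial, add_comm β α] at h
    linarith
  rcases abs_cases (y (α + β)) with ⟨habs, _⟩ | ⟨habs, _⟩ <;> rw [habs]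
  · linarith [key (-1)]
  · linarith [key 1]

lemma moment_add_self_le_pow (hy0 : y 0 = 1) (hM : IsPSD (locMat k 1 y)) (hd : 1 ≤ d)
    (hdk : d ≤ k) (hstep : ∀ δ : Fin n →₀ ℕ, mdeg δ + d ≤ k →
      ∑ β ∈ degLE n d, y (β + β + (δ + δ)) ≤ R * y (δ + δ))
    {α : Fin n →₀ ℕ} (hα : mdeg α ≤ k) : y (α + α) ≤ max 1 R ^ (mdeg α + 1) := by
  induction hN : mdeg α using Nat.strong_induction_on generalizing α with
  | _ N ih =>
  rcases Nat.eq_zero_or_pos N with rfl | hN0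
  · rw [(Finsupp.degree_eq_zero_iff α).1 (mdeg_eq_degree α ▸ hN), add_zero, hy0]
    simp
  -- peel off `β` with `|β| = min d |α|`; as `d ≥ 1`, the rest `δ` has smaller degree
  obtain ⟨β, δ, rfl, hβ⟩ := exists_add_eq_of_le_mdeg (c := min d (mdeg α)) (min_le_right _ _)
  rw [mdeg_add] at hα hN hβ
  have hδk : mdeg δ + d ≤ k := by omega
  have hterm : y (β + β + (δ + δ)) ≤ ∑ β' ∈ degLE n d, y (β' + β' + (δ + δ)) :=
    Finset.single_le_sum (f := fun β' => y (β' + β' + (δ + δ))) (fun β' hβ' => by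
        rw [← add_add_add_comm]
        exact hM.moment_add_self_nonneg (by rw [mdeg_add]; have := mem_degLE.1 hβ'; omega))
      (mem_degLE.2 (by omega))
  have hc : 1 ≤ max 1 R := le_max_left _ _
  calc y (β + δ + (β + δ)) = y (β + β + (δ + δ)) := by rw [add_add_add_comm]
    _ ≤ R * y (δ + δ) := hterm.trans (hstep δ hδk)
    _ ≤ max 1 R * max 1 R ^ (mdeg δ + 1) :=
      mul_le_mul (le_max_right _ _) (ih _ (by omega) (by omega) rfl)
        (hM.moment_add_self_nonneg (by omega)) (by positivity)
    _ = max 1 R ^ (mdeg δ + 2) := by ring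
    _ ≤ max 1 R ^ (N + 1) := pow_le_pow_right₀ hc (by omega)

lemma abs_moment_le_pow (hy0 : y 0 = 1) (hM : IsPSD (locMat k 1 y)) (hd : 1 ≤ d)
    (hdk : d ≤ k) (hstep : ∀ δ : Fin n →₀ ℕ, mdeg δ + d ≤ k →
      ∑ β ∈ degLE n d, y (β + β + (δ + δ)) ≤ R * y (δ + δ))
    {μ : Fin n →₀ ℕ} (hμ : mdeg μ ≤ 2 * k) : |y μ| ≤ max 1 R ^ (k + 1) := by
  obtain ⟨α, β, rfl, hα⟩ := exists_add_eq_of_le_mdeg (c := min k (mdeg μ)) (min_le_right _ _)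
  rw [mdeg_add] at hμ hα
  have hαk : mdeg α ≤ k := by omega
  have hβk : mdeg β ≤ k := by omega
  have hbound : ∀ γ : Fin n →₀ ℕ, mdeg γ ≤ k → y (γ + γ) ≤ max 1 R ^ (k + 1) := fun γ hγ =>
    (moment_add_self_le_pow hy0 hM hd hdk hstep hγ).trans
      (pow_le_pow_right₀ (le_max_left _ _) (by omega))
  linarith [hM.two_mul_abs_moment_le hαk hβk, hbound α hαk, hbound β hβk]

end MomentBound

section Relaxation
variable {n k d : ℕ} {ι : Type*} {g : ι → MvPolynomial (Fin n) ℝ} {y : (Fin n →₀ ℕ) → ℝ}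

structure MomentFeasible (k : ℕ) (g : ι → MvPolynomial (Fin n) ℝ) (y : (Fin n →₀ ℕ) → ℝ) :
    Prop where
  zero : y 0 = 1
  psd_one : IsPSD (locMat k 1 y)
  psd : ∀ i, IsPSD (locMat k (g i) y)

lemma momentFeasible_sum_elim_iff {κ : Type*} {f : ι → MvPolynomial (Fin n) ℝ}
    {h : κ → MvPolynomial (Fin n) ℝ} :
    MomentFeasible k (Sum.elim f h) y ↔ y 0 = 1 ∧ IsPSD (locMat k 1 y) ∧
      (∀ i, IsPSD (locMat k (f i) y)) ∧ ∀ j, IsPSD (locMat k (h j) y) :=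
  ⟨fun hy => ⟨hy.zero, hy.psd_one, fun i => hy.psd (.inl i), fun j => hy.psd (.inr j)⟩,
    fun ⟨h0, h1, hf, hh⟩ => ⟨h0, h1, Sum.forall.2 ⟨hf, hh⟩⟩⟩

variable [Fintype ι]

structure SosCertificate (d : ℕ) (g : ι → MvPolynomial (Fin n) ℝ) (R : ℝ)
    (a₀ : MvPolynomial (Fin n) ℝ) (a : ι → MvPolynomial (Fin n) ℝ) : Prop where
  sos_zero : IsSos a₀
  sos : ∀ i, IsSos (a i)
  totalDegree_le : ∀ i, (a i * g i).totalDegree ≤ 2 * d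
  eq : C R - monVecSq n d = a₀ + ∑ i, a i * g i

lemma SosCertificate.totalDegree_zero_le {R : ℝ} {a₀ : MvPolynomial (Fin n) ℝ}
    {a : ι → MvPolynomial (Fin n) ℝ} (hc : SosCertificate d g R a₀ a) :
    a₀.totalDegree ≤ 2 * d := by
  rw [eq_sub_of_add_eq hc.eq.symm]
  refine (totalDegree_sub _ _).trans (max_le ((totalDegree_sub _ _).trans (max_le ?_ ?_)) ?_)
  · rw [totalDegree_C]; exact Nat.zero_le _
  · exact totalDegree_monVecSq_le n d
  · exact totalDegree_finsetSum_le fun i _ => hc.totalDegree_le i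

lemma SosCertificate.sum_le {R : ℝ} {a₀ : MvPolynomial (Fin n) ℝ}
    {a : ι → MvPolynomial (Fin n) ℝ} (hc : SosCertificate d g R a₀ a)
    (hg : ∀ i, halfCeil (g i).totalDegree ≤ d) (hy : MomentFeasible k g y)
    {δ : Fin n →₀ ℕ} (hδ : mdeg δ + d ≤ k) :
    ∑ β ∈ degLE n d, y (β + β + (δ + δ)) ≤ R * y (δ + δ) := by
  have key := congrArg (fun p => Riesz y (monomial (δ + δ) 1 * p)) hc.eq
  simp only [Riesz_monomial_mul_sub_monVecSq, mul_add, Finset.mul_sum, Riesz_add, Riesz_sum] at key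
  have h₀ : 0 ≤ Riesz y (monomial (δ + δ) 1 * a₀) := by
    simpa using hy.psd_one.riesz_monomial_mul_sos_mul_nonneg hc.sos_zero
      (by simp [halfCeil]) (by simpa using hc.totalDegree_zero_le) hδ
  have hi : ∀ i, 0 ≤ Riesz y (monomial (δ + δ) 1 * (a i * g i)) := fun i =>
    (hy.psd i).riesz_monomial_mul_sos_mul_nonneg (hc.sos i) (hg i) (hc.totalDegree_le i) hδ
  linarith [Finset.sum_nonneg fun i (_ : i ∈ Finset.univ) => hi i]

end Relaxation

section Topology
variable {n k : ℕ}

lemma exists_forall_le_of_isCompact_of_dominated {X : Type*} [TopologicalSpace X]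
    {S K : Set X} {φ : X → ℝ} (hK : IsCompact K) (hKS : K ⊆ S) (hS : S.Nonempty)
    (hφ : ContinuousOn φ K) (hdom : ∀ y ∈ S, ∃ z ∈ K, φ z ≤ φ y) :
    ∃ y ∈ S, ∀ z ∈ S, φ y ≤ φ z := by
  obtain ⟨z₀, hz₀, -⟩ := hdom _ hS.some_mem
  obtain ⟨y, hy, hmin⟩ := hK.exists_isMinOn ⟨z₀, hz₀⟩ hφ
  refine ⟨y, hKS hy, fun z hz => ?_⟩
  obtain ⟨w, hw, hwz⟩ := hdom z hz
  exact (hmin hw).trans hwz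

lemma continuous_locMat_apply (f : MvPolynomial (Fin n) ℝ) (α β : Fin n →₀ ℕ) :
    Continuous fun y : (Fin n →₀ ℕ) → ℝ => locMat k f y α β := by
  unfold locMat
  split_ifs <;> fun_prop

lemma isClosed_setOf_isPSD {X : Type*} [TopologicalSpace X]
    {M : X → Matrix (Fin n →₀ ℕ) (Fin n →₀ ℕ) ℝ} (hM : ∀ α β, Continuous fun x => M x α β) :
    IsClosed {x | IsPSD (M x)} := by
  simp only [IsPSD, Set.ofPred_and, Set.ofPred_forall]
  exact (isClosed_iInter fun α => isClosed_iInter fun β => isClosed_eq (hM α β) (hM β α)).inter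
    (isClosed_iInter fun v => isClosed_le continuous_const (by fun_prop))

lemma isClosed_setOf_momentFeasible {ι : Type*} (g : ι → MvPolynomial (Fin n) ℝ) :
    IsClosed {y | MomentFeasible k g y} := by
  have hset : {y | MomentFeasible k g y} = {y | y 0 = 1} ∩ {y | IsPSD (locMat k 1 y)} ∩
      ⋂ i, {y | IsPSD (locMat k (g i) y)} := by
    ext y
    simp only [Set.mem_inter_iff, Set.mem_iInter, Set.mem_ofPred_eq]
    exact ⟨fun h => ⟨⟨h.zero, h.psd_one⟩, h.psd⟩, fun h => ⟨h.1.1, h.1.2, h.2⟩⟩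
  rw [hset]
  exact ((isClosed_eq (continuous_apply 0) continuous_const).inter
    (isClosed_setOf_isPSD (continuous_locMat_apply 1))).inter
    (isClosed_iInter fun i => isClosed_setOf_isPSD (continuous_locMat_apply (g i)))

end Topology

section Truncation
variable {n k : ℕ} {y : (Fin n →₀ ℕ) → ℝ}

def truncMoments (D : ℕ) (y : (Fin n →₀ ℕ) → ℝ) : (Fin n →₀ ℕ) → ℝ :=
  fun μ => if mdeg μ ≤ D then y μ else 0

lemma truncMoments_of_le {D : ℕ} {μ : Fin n →₀ ℕ} (hμ : mdeg μ ≤ D) :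
    truncMoments D y μ = y μ :=
  if_pos hμ

lemma truncMoments_of_lt {D : ℕ} {μ : Fin n →₀ ℕ} (hμ : D < mdeg μ) :
    truncMoments D y μ = 0 :=
  if_neg hμ.not_ge

lemma locMat_truncMoments {f : MvPolynomial (Fin n) ℝ} (hf : halfCeil f.totalDegree ≤ k) :
    locMat k f (truncMoments (2 * k) y) = locMat k f y := by
  ext α β
  unfold locMat
  split_ifs with h
  · refine Finset.sum_congr rfl fun γ hγ => ?_
    rw [truncMoments_of_le]
    have := mdeg_le_totalDegree hγ
    rw [mdeg_add, mdeg_add]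
    unfold halfCeil at *
    omega
  · rfl

lemma MomentFeasible.truncMoments {ι : Type*} {g : ι → MvPolynomial (Fin n) ℝ}
    (hy : MomentFeasible k g y) (hg : ∀ i, halfCeil (g i).totalDegree ≤ k) :
    MomentFeasible k g (truncMoments (2 * k) y) where
  zero := (truncMoments_of_le (by simp [mdeg])).trans hy.zero
  psd_one := by rw [locMat_truncMoments (by simp [halfCeil])]; exact hy.psd_one
  psd i := by rw [locMat_truncMoments (hg i)]; exact hy.psd i

end Truncation

section Objective
variable {n k d : ℕ} (ξ : (Fin n →₀ ℕ) → ℝ) {y : (Fin n →₀ ℕ) → ℝ}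

noncomputable def relaxationObjective (d : ℕ) (ξ y : (Fin n →₀ ℕ) → ℝ) : ℝ :=
  (∑ β ∈ degLE n d, y (β + β)) + ∑ α ∈ degLE n (2 * d), ξ α * y α

lemma continuous_relaxationObjective : Continuous (relaxationObjective d ξ) := by
  unfold relaxationObjective
  fun_prop

lemma relaxationObjective_truncMoments (hdk : d ≤ k) :
    relaxationObjective d ξ (truncMoments (2 * k) y) = relaxationObjective d ξ y := by
  unfold relaxationObjective
  congr 1 <;> refine Finset.sum_congr rfl fun β hβ => ?_ <;> have := mem_degLE.1 hβ
  · rw [truncMoments_of_le (by rw [mdeg_add]; omega)]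
  · rw [truncMoments_of_le (by omega)]

lemma relaxationObjective_zero (hy : y 0 = 1) : relaxationObjective 0 ξ y = 1 + ξ 0 := by
  simp [relaxationObjective, degLE_zero, hy]

end Objective

section Compactness
variable {n k d : ℕ} {ι : Type*} [Fintype ι] {g : ι → MvPolynomial (Fin n) ℝ}

lemma SosCertificate.isCompact_feasible {R : ℝ} {a₀ : MvPolynomial (Fin n) ℝ}
    {a : ι → MvPolynomial (Fin n) ℝ} (hc : SosCertificate d g R a₀ a)
    (hg : ∀ i, halfCeil (g i).totalDegree ≤ d) (hd : 1 ≤ d) (hdk : d ≤ k) :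
    IsCompact {y | MomentFeasible k g y ∧ ∀ μ, 2 * k < mdeg μ → y μ = 0} := by
  set B := max 1 R ^ (k + 1)
  have hclosed : IsClosed {y : (Fin n →₀ ℕ) → ℝ | ∀ μ, 2 * k < mdeg μ → y μ = 0} := by
    simp only [Set.ofPred_forall]
    refine isClosed_iInter fun μ => ?_
    by_cases hμ : 2 * k < mdeg μ
    · simpa [hμ] using isClosed_eq (continuous_apply μ) continuous_const
    · simp [hμ]
  refine (isCompact_univ_pi fun _ => isCompact_Icc (a := -B) (b := B)).of_isClosed_subset
    ((isClosed_setOf_momentFeasible g).inter hclosed) fun y ⟨hy, hy₀⟩ => ?_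
  refine Set.mem_univ_pi.2 fun μ => Set.mem_Icc.2 (abs_le.1 ?_)
  rcases le_or_gt (mdeg μ) (2 * k) with hμ | hμ
  · exact abs_moment_le_pow hy.zero hy.psd_one hd hdk
      (fun _ => hc.sum_le hg hy) hμ
  · rw [hy₀ μ hμ, abs_zero]
    positivity

theorem SosCertificate.exists_forall_relaxationObjective_le {R : ℝ} {a₀ : MvPolynomial (Fin n) ℝ}
    {a : ι → MvPolynomial (Fin n) ℝ} (hc : SosCertificate d g R a₀ a)
    (hg : ∀ i, halfCeil (g i).totalDegree ≤ d) (hdk : d ≤ k) (ξ : (Fin n →₀ ℕ) → ℝ)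
    (hne : ∃ y, MomentFeasible k g y) :
    ∃ ystar, MomentFeasible k g ystar ∧
      ∀ y, MomentFeasible k g y → relaxationObjective d ξ ystar ≤ relaxationObjective d ξ y := by
  obtain ⟨y₀, hy₀⟩ := hne
  rcases Nat.eq_zero_or_pos d with rfl | hd
  · exact ⟨y₀, hy₀, fun y hy => by
      rw [relaxationObjective_zero ξ hy₀.zero, relaxationObjective_zero ξ hy.zero]⟩
  exact exists_forall_le_of_isCompact_of_dominated (hc.isCompact_feasible hg hd hdk)
    (fun y hy => hy.1) ⟨y₀, hy₀⟩ (continuous_relaxationObjective ξ).continuousOn fun y hy =>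
      ⟨truncMoments (2 * k) y, ⟨hy.truncMoments fun i => (hg i).trans hdk,
        fun μ hμ => truncMoments_of_lt hμ⟩, (relaxationObjective_truncMoments ξ hdk).le⟩

end Compactness

theorem moment_relaxation_attains_min_general {n r t : ℕ}
    (f : Fin r → MvPolynomial (Fin n) ℝ)
    (h : Fin t → MvPolynomial (Fin n) ℝ)
    (d : ℕ)
    (hd : d = max (Finset.univ.sup fun i => halfCeil (f i).totalDegree)
                  (Finset.univ.sup fun j => halfCeil (h j).totalDegree))
    -- Assumption AC:
    (Rv : ℝ)
    (a₀ : MvPolynomial (Fin n) ℝ) (a : Fin r → MvPolynomial (Fin n) ℝ)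
    (b : Fin t → MvPolynomial (Fin n) ℝ)
    (ha₀ : IsSos a₀) (ha : ∀ i, IsSos (a i)) (hb : ∀ j, IsSos (b j))
    (hda : ∀ i, (a i * f i).totalDegree ≤ 2 * d)
    (hdb : ∀ j, (b j * h j).totalDegree ≤ 2 * d)
    (hcert : MvPolynomial.C Rv - monVecSq n d = a₀ + ∑ i, a i * f i + ∑ j, b j * h j)
    (k : ℕ) (hk : d ≤ k) (ξ : (Fin n →₀ ℕ) → ℝ)
    -- the feasible set and the objective of the order-k moment relaxation:
    (F : Set ((Fin n →₀ ℕ) → ℝ))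
    (hF : F = {y | y 0 = 1 ∧
        IsPSD (locMat k (1 : MvPolynomial (Fin n) ℝ) y) ∧
        (∀ i, IsPSD (locMat k (f i) y)) ∧
        (∀ j, IsPSD (locMat k (h j) y))})
    (obj : ((Fin n →₀ ℕ) → ℝ) → ℝ)
    (hobj : ∀ y, obj y = (∑ β ∈ degLE n d, y (β + β)) + ∑ α ∈ degLE n (2 * d), ξ α * y α)
    (hne : F.Nonempty) :
    ∃ ystar ∈ F, ∀ y ∈ F, obj ystar ≤ obj y := by
  obtain rfl : obj = relaxationObjective d ξ := funext hobj
  have hg : ∀ i, halfCeil ((Sum.elim f h) i).totalDegree ≤ d := by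
    rw [hd]
    exact Sum.forall.2
      ⟨fun i => le_max_of_le_left (Finset.le_sup (f := fun i => halfCeil (f i).totalDegree)
        (Finset.mem_univ i)),
      fun j => le_max_of_le_right (Finset.le_sup (f := fun j => halfCeil (h j).totalDegree)
        (Finset.mem_univ j))⟩
  have hc : SosCertificate d (Sum.elim f h) Rv a₀ (Sum.elim a b) :=
    ⟨ha₀, Sum.forall.2 ⟨ha, hb⟩, Sum.forall.2 ⟨hda, hdb⟩,
      by rw [hcert, Fintype.sum_sum_type, add_assoc]; rfl⟩
  obtain rfl : F = {y | MomentFeasible k (Sum.elim f h) y} :=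
    hF.trans (Set.ext fun y => momentFeasible_sum_elim_iff.symm)
  exact hc.exists_forall_relaxationObjective_le hg hk ξ hne

/-- Under Assumption AC, fix `k ≥ d` and `ξ ∈ ℝ^{ℕ^n_{2d}}`. If the order-`k`
moment relaxation is feasible, then the SDP minimizing
`∑_{|β|≤d} y_{2β} + ∑_{|α|≤2d} ξ_α y_α` over its feasible set attains its minimum. -/
theorem moment_relaxation_attains_min {n m r t : ℕ}
    (f : Fin r → MvPolynomial (Fin n) ℝ) (g : Fin t → MvPolynomial (Fin m) ℝ)
    (A : Matrix (Fin m) (Fin n) ℝ)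
    (h : Fin t → MvPolynomial (Fin n) ℝ)
    (hh : ∀ j, h j = MvPolynomial.aeval
      (fun i : Fin m => ∑ l : Fin n, MvPolynomial.C (A i l) * MvPolynomial.X l) (g j))
    (d : ℕ)
    (hd : d = max (Finset.univ.sup fun i => halfCeil (f i).totalDegree)
                  (Finset.univ.sup fun j => halfCeil (h j).totalDegree))
    -- Assumption AC:
    (Rv : ℝ) (hR : 0 < Rv)
    (a₀ : MvPolynomial (Fin n) ℝ) (a : Fin r → MvPolynomial (Fin n) ℝ)
    (b : Fin t → MvPolynomial (Fin n) ℝ)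
    (ha₀ : IsSos a₀) (ha : ∀ i, IsSos (a i)) (hb : ∀ j, IsSos (b j))
    (hda : ∀ i, (a i * f i).totalDegree ≤ 2 * d)
    (hdb : ∀ j, (b j * h j).totalDegree ≤ 2 * d)
    (hcert : MvPolynomial.C Rv - monVecSq n d = a₀ + ∑ i, a i * f i + ∑ j, b j * h j)
    (k : ℕ) (hk : d ≤ k) (ξ : (Fin n →₀ ℕ) → ℝ)
    -- the feasible set and the objective of the order-k moment relaxation:
    (F : Set ((Fin n →₀ ℕ) → ℝ))
    (hF : F = {y | y 0 = 1 ∧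
        IsPSD (locMat k (1 : MvPolynomial (Fin n) ℝ) y) ∧
        (∀ i, IsPSD (locMat k (f i) y)) ∧
        (∀ j, IsPSD (locMat k (h j) y))})
    (obj : ((Fin n →₀ ℕ) → ℝ) → ℝ)
    (hobj : ∀ y, obj y = (∑ β ∈ degLE n d, y (β + β)) + ∑ α ∈ degLE n (2 * d), ξ α * y α)
    (hne : F.Nonempty) :
    ∃ ystar ∈ F, ∀ y ∈ F, obj ystar ≤ obj y :=
  moment_relaxation_attains_min_general f h d hd Rv a₀ a b ha₀ ha hb hda hdb hcert k hk ξ F hF obj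
    hobj hne
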